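/- arXiv:2508.15199 — 2 statements merged into one kernel-verified Lean document; each statement's English description precedes it below -/
import Mathlib

section
/- Let φ: ℝ×ℝ² → ℝ be differentiable, fix a point where ∂₁φ = ∂₂φ = 0, and set V₀ = ∂_tφ·e₃ + e₀, V₁ = ∂₁φ·e₃ + e₁, V₂ = ∂₂φ·e₃ + e₂ (these span the tangent space to the graph hypersurface {y³ = φ(t,y¹,y²)}). Then the 3×3 Gram determinant det(G(Vₐ,V_b))_{a,b=0,1,2} with respect to the acoustical metric G equals (v³ − ∂_tφ)² − c². In particular, the tangent space is degenerate (null) for G if and only if (v³ − ∂_tφ)² = c². -/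
/-! At a point where `∂₁φ = ∂₂φ = 0` the frame is `e₀ + (∂ₜφ) e₃, e₁, e₂`, so the Gram matrix is
the identity bordered by the row `(G(V₀,V₀), -v¹, -v²)`. Expanding along the first row, the
determinant is `G(V₀,V₀) - (v¹)² - (v²)²`, and completing the square in the `e₃`-terms of
`G(V₀,V₀)` leaves `(v³ - ∂ₜφ)² - c²`. -/

theorem Matrix.det_fin_three_bordered_one {R : Type*} [CommRing R] (a b d : R) :
    !![a, b, d; b, 1, 0; d, 0, 1].det = a - b ^ 2 - d ^ 2 := by
  rw [Matrix.det_fin_three]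
  simp only [Matrix.of_apply, Matrix.cons_val', Matrix.cons_val_zero, Matrix.cons_val_one,
    Matrix.cons_val_two, Matrix.empty_val', Matrix.cons_val_fin_one, Matrix.head_cons,
    Matrix.tail_cons, Matrix.head_fin_const]
  ring

theorem acoustic_graph_gram_eq (c φt : ℝ) (v : Fin 3 → ℝ) :
    (fun a b => ∑ μ : Fin 4, ∑ ν : Fin 4,
        !![-c^2 + (v 0^2 + v 1^2 + v 2^2), -v 0, -v 1, -v 2;
           -v 0, 1, 0, 0;
           -v 1, 0, 1, 0;
           -v 2, 0, 0, 1] μ ν *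
        ![![1, 0, 0, φt], ![0, 1, 0, 0], ![0, 0, 1, 0]] a μ *
        ![![1, 0, 0, φt], ![0, 1, 0, 0], ![0, 0, 1, 0]] b ν : Matrix (Fin 3) (Fin 3) ℝ) =
      !![-c^2 + v 0^2 + v 1^2 + (v 2 - φt)^2, -v 0, -v 1;
         -v 0, 1, 0;
         -v 1, 0, 1] := by
  ext a b
  fin_cases a <;> fin_cases b <;> simp [Fin.sum_univ_four]
  ring

theorem graph_gram_determinant_general
    (c : ℝ) (v : Fin 3 → ℝ) (φt : ℝ)
    (G : Matrix (Fin 4) (Fin 4) ℝ)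
    (hG : G =
      !![-c^2 + (v 0^2 + v 1^2 + v 2^2), -v 0, -v 1, -v 2;
         -v 0, 1, 0, 0;
         -v 1, 0, 1, 0;
         -v 2, 0, 0, 1])
    (V : Fin 3 → Fin 4 → ℝ)
    (hV : V = ![![1, 0, 0, φt], ![0, 1, 0, 0], ![0, 0, 1, 0]])
    (Gram : Matrix (Fin 3) (Fin 3) ℝ)
    (hGram : Gram = fun a b => ∑ μ : Fin 4, ∑ ν : Fin 4, G μ ν * V a μ * V b ν) :
    Gram.det = (v 2 - φt)^2 - c^2 ∧
    (Gram.det = 0 ↔ (v 2 - φt)^2 = c^2) := by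
  have hdet : Gram.det = (v 2 - φt)^2 - c^2 := by
    rw [hGram, hG, hV, acoustic_graph_gram_eq, Matrix.det_fin_three_bordered_one]
    ring
  exact ⟨hdet, by rw [hdet, sub_eq_zero]⟩

/-- the Gram determinant of the tangent frame of the graph
hypersurface equals (v³ - ∂ₜφ)² - c², hence degeneracy iff (v³-∂ₜφ)² = c². -/
theorem graph_gram_determinant
    (c : ℝ) (hc : 0 < c) (v : Fin 3 → ℝ) (φt : ℝ)
    (G : Matrix (Fin 4) (Fin 4) ℝ)
    (hG : G =
      !![-c^2 + (v 0^2 + v 1^2 + v 2^2), -v 0, -v 1, -v 2;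
         -v 0, 1, 0, 0;
         -v 1, 0, 1, 0;
         -v 2, 0, 0, 1])
    (V : Fin 3 → Fin 4 → ℝ)
    (hV : V = ![![1, 0, 0, φt], ![0, 1, 0, 0], ![0, 0, 1, 0]])
    (Gram : Matrix (Fin 3) (Fin 3) ℝ)
    (hGram : Gram = fun a b => ∑ μ : Fin 4, ∑ ν : Fin 4, G μ ν * V a μ * V b ν) :
    Gram.det = (v 2 - φt)^2 - c^2 ∧
    (Gram.det = 0 ↔ (v 2 - φt)^2 = c^2) :=
  graph_gram_determinant_general c v φt G hG V hV Gram hGram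
end

section
/- The null decomposition of the wave operator for time-independent data along a single derivative: for the acoustical metric on ℝ⁴ and a C² function φ, the identity □_g φ = −c⁻²B²(φ) + c⁻²(∇_B B)(φ) + Δφ − c⁻²(div v)·B(φ) holds, where □_g φ = (1/√|det g|)∂_μ(√|det g| g^{μν}∂_ν φ), B = ∂_t + v·∇, and Δ is the Euclidean spatial Laplacian; here ∇_B B = c⁻¹B(c)B + cΣᵢ∂ᵢ(c)∂ᵢ, so that □_g φ = −c⁻²B²(φ) + c⁻³B(c)B(φ) + c⁻¹∇c·∇φ + Δφ − c⁻²(div v)B(φ). -/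
noncomputable def pd4 (μ : Fin 4) (f : (Fin 4 → ℝ) → ℝ) (x : Fin 4 → ℝ) : ℝ :=
  fderiv ℝ f x (Pi.single μ 1)

/-- Material derivative B = ∂ₜ + Σᵢ vⁱ ∂ᵢ. -/
noncomputable def matD (v : Fin 3 → (Fin 4 → ℝ) → ℝ) (f : (Fin 4 → ℝ) → ℝ)
    (x : Fin 4 → ℝ) : ℝ :=
  pd4 0 f x + ∑ i : Fin 3, v i x * pd4 i.succ f x

noncomputable def divv (v : Fin 3 → (Fin 4 → ℝ) → ℝ) (x : Fin 4 → ℝ) : ℝ :=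
  ∑ i : Fin 3, pd4 i.succ (v i) x

/-- The inverse acoustical metric as a matrix-valued field. -/
noncomputable def ginvF (c : (Fin 4 → ℝ) → ℝ) (v : Fin 3 → (Fin 4 → ℝ) → ℝ)
    (y : Fin 4 → ℝ) : Matrix (Fin 4) (Fin 4) ℝ :=
  !![-1/(c y)^2, -v 0 y/(c y)^2, -v 1 y/(c y)^2, -v 2 y/(c y)^2;
     -v 0 y/(c y)^2, 1 - v 0 y*v 0 y/(c y)^2, -(v 0 y*v 1 y)/(c y)^2, -(v 0 y*v 2 y)/(c y)^2;
     -v 1 y/(c y)^2, -(v 1 y*v 0 y)/(c y)^2, 1 - v 1 y*v 1 y/(c y)^2, -(v 1 y*v 2 y)/(c y)^2;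
     -v 2 y/(c y)^2, -(v 2 y*v 0 y)/(c y)^2, -(v 2 y*v 1 y)/(c y)^2, 1 - v 2 y*v 2 y/(c y)^2]

/-- Laplace–Beltrami operator of the acoustical metric in Cartesian coordinates,
using √|det g| = c. -/
noncomputable def boxg (c : (Fin 4 → ℝ) → ℝ) (v : Fin 3 → (Fin 4 → ℝ) → ℝ)
    (φ : (Fin 4 → ℝ) → ℝ) (x : Fin 4 → ℝ) : ℝ :=
  (1 / c x) * ∑ μ : Fin 4,
    pd4 μ (fun y => c y * ∑ ν : Fin 4, ginvF c v y μ ν * pd4 ν φ y) x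

/-!
The inverse acoustical metric splits as `g⁻¹ = diag(0,1,1,1) - c⁻² B ⊗ B`, where `B = (1, v)`
is the material-derivative field. Hence the densitised gradient `c g^{μν} ∂_ν φ` is `c ∇φ`
(spatial components only) minus `c⁻¹ B(φ) B`. Taking its divergence with the Leibniz rule,
`∂_μ (c ∂_i φ)` gives `∇c · ∇φ + c Δφ`, while `∂_μ (c⁻¹ B(φ) B^μ)` gives
`-c⁻² B(c) B(φ) + c⁻¹ (div v) B(φ) + c⁻¹ B²(φ)` because `div B = div v`.
-/

section PartialDerivatives

variable {f g : (Fin 4 → ℝ) → ℝ} {x : Fin 4 → ℝ}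

lemma pd4_const (μ : Fin 4) (a : ℝ) : pd4 μ (fun _ => a) x = 0 := by
  simp [pd4]

lemma pd4_sub (μ : Fin 4) (hf : DifferentiableAt ℝ f x) (hg : DifferentiableAt ℝ g x) :
    pd4 μ (fun y => f y - g y) x = pd4 μ f x - pd4 μ g x := by
  simp [pd4, fderiv_fun_sub hf hg]

lemma pd4_mul (μ : Fin 4) (hf : DifferentiableAt ℝ f x) (hg : DifferentiableAt ℝ g x) :
    pd4 μ (fun y => f y * g y) x = pd4 μ f x * g x + f x * pd4 μ g x := by
  simp only [pd4, fderiv_fun_mul hf hg, add_apply, smul_apply, smul_eq_mul]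
  ring

lemma pd4_inv (μ : Fin 4) (hf : DifferentiableAt ℝ f x) (hx : f x ≠ 0) :
    pd4 μ (fun y => (f y)⁻¹) x = -pd4 μ f x / f x ^ 2 := by
  have h : HasFDerivAt (fun y => (f y)⁻¹) _ x := (hasFDerivAt_inv hx).comp x hf.hasFDerivAt
  simp only [pd4, h.fderiv, ContinuousLinearMap.comp_apply,
    ContinuousLinearMap.toSpanSingleton_apply, smul_eq_mul]
  ring

lemma contDiff_pd4 {n : WithTop ℕ∞} (μ : Fin 4) (hf : ContDiff ℝ (n + 1) f) :
    ContDiff ℝ n (pd4 μ f) :=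
  (hf.fderiv_right le_rfl).clm_apply contDiff_const

end PartialDerivatives

section Divergence

noncomputable def div4 (X : Fin 4 → (Fin 4 → ℝ) → ℝ) (x : Fin 4 → ℝ) : ℝ :=
  ∑ μ, pd4 μ (X μ) x

variable {X Y : Fin 4 → (Fin 4 → ℝ) → ℝ} {a : (Fin 4 → ℝ) → ℝ} {x : Fin 4 → ℝ}

lemma div4_sub (hX : ∀ μ, DifferentiableAt ℝ (X μ) x)
    (hY : ∀ μ, DifferentiableAt ℝ (Y μ) x) :
    div4 (fun μ y => X μ y - Y μ y) x = div4 X x - div4 Y x := by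
  simp only [div4, pd4_sub _ (hX _) (hY _), Finset.sum_sub_distrib]

lemma div4_mul (ha : DifferentiableAt ℝ a x) (hX : ∀ μ, DifferentiableAt ℝ (X μ) x) :
    div4 (fun μ y => a y * X μ y) x = ∑ μ, pd4 μ a x * X μ x + a x * div4 X x := by
  simp only [div4, pd4_mul _ ha (hX _), Finset.sum_add_distrib, Finset.mul_sum]

end Divergence

section AcousticalMetric

variable (c : (Fin 4 → ℝ) → ℝ) (v : Fin 3 → (Fin 4 → ℝ) → ℝ) (φ : (Fin 4 → ℝ) → ℝ)

noncomputable def flowField : Fin 4 → (Fin 4 → ℝ) → ℝ :=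
  Fin.cons (fun _ => 1) v

noncomputable def spatialGrad : Fin 4 → (Fin 4 → ℝ) → ℝ :=
  Fin.cons (fun _ => 0) fun i => pd4 i.succ φ

noncomputable def acousticFlux (μ : Fin 4) (y : Fin 4 → ℝ) : ℝ :=
  c y * spatialGrad φ μ y - (c y)⁻¹ * (flowField v μ y * matD v φ y)

variable {c v φ} {x : Fin 4 → ℝ}

lemma matD_eq_sum (f : (Fin 4 → ℝ) → ℝ) :
    matD v f x = ∑ μ, flowField v μ x * pd4 μ f x := by
  simp [matD, flowField, Fin.sum_univ_succ]

lemma differentiable_flowField (hv : ∀ i, Differentiable ℝ (v i)) (μ : Fin 4) :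
    Differentiable ℝ (flowField v μ) :=
  Fin.cases (differentiable_const 1) hv μ

lemma differentiable_spatialGrad (hφ : ∀ μ, Differentiable ℝ (pd4 μ φ)) (μ : Fin 4) :
    Differentiable ℝ (spatialGrad φ μ) :=
  Fin.cases (differentiable_const 0) (fun i => hφ i.succ) μ

lemma differentiable_matD {f : (Fin 4 → ℝ) → ℝ} (hv : ∀ i, Differentiable ℝ (v i))
    (hf : ∀ μ, Differentiable ℝ (pd4 μ f)) : Differentiable ℝ (matD v f) := by
  rw [show matD v f = fun y => ∑ μ, flowField v μ y * pd4 μ f y from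
    funext fun _ => matD_eq_sum f]
  exact Differentiable.fun_sum fun μ _ => (differentiable_flowField hv μ).mul (hf μ)

lemma div4_flowField : div4 (flowField v) x = divv v x := by
  simp [div4, flowField, divv, Fin.sum_univ_succ (n := 3), pd4_const]

lemma div4_flowField_mul {f : (Fin 4 → ℝ) → ℝ} (hv : ∀ i, Differentiable ℝ (v i))
    (hf : DifferentiableAt ℝ f x) :
    div4 (fun μ y => flowField v μ y * f y) x = divv v x * f x + matD v f x := by
  rw [← div4_flowField, matD_eq_sum]
  simp only [div4, pd4_mul _ (differentiable_flowField hv _ x) hf, Finset.sum_add_distrib,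
    Finset.sum_mul]

lemma sum_pd4_inv_mul_flowField {a f : (Fin 4 → ℝ) → ℝ} (ha : DifferentiableAt ℝ a x)
    (hx : a x ≠ 0) :
    ∑ μ, pd4 μ (fun y => (a y)⁻¹) x * (flowField v μ x * f x)
      = -matD v a x / a x ^ 2 * f x := by
  simp only [pd4_inv _ ha hx, matD_eq_sum, Finset.sum_mul, neg_div, Finset.sum_div,
    ← Finset.sum_neg_distrib]
  refine Finset.sum_congr rfl fun μ _ => ?_
  ring

lemma sum_pd4_mul_spatialGrad (f : (Fin 4 → ℝ) → ℝ) :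
    ∑ μ, pd4 μ f x * spatialGrad φ μ x = ∑ i : Fin 3, pd4 i.succ f x * pd4 i.succ φ x := by
  simp [spatialGrad, Fin.sum_univ_succ (n := 3)]

lemma div4_spatialGrad :
    div4 (spatialGrad φ) x = ∑ i : Fin 3, pd4 i.succ (pd4 i.succ φ) x := by
  simp [div4, spatialGrad, Fin.sum_univ_succ (n := 3), pd4_const]

lemma sum_ginvF_mul (y w : Fin 4 → ℝ) (μ : Fin 4) :
    ∑ ν, ginvF c v y μ ν * w ν
      = (Fin.cons 0 fun i => w i.succ : Fin 4 → ℝ) μ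
        - flowField v μ y * (∑ ν, flowField v ν y * w ν) / c y ^ 2 := by
  refine Fin.cases ?_ (fun i => ?_) μ
  · simp only [ginvF, flowField, Fin.sum_univ_succ, Fin.cons_zero, Fin.cons_succ,
      Matrix.of_apply, Matrix.cons_val', Matrix.cons_val_fin_one, Matrix.cons_val_zero,
      Matrix.cons_val_succ,
      Finset.univ_unique, Fin.default_eq_zero, Finset.sum_singleton, Fin.reduceSucc]
    ring
  · simp only [flowField, Fin.cons_succ, Fin.cons_zero, Fin.sum_univ_succ]
    fin_cases i <;> simp [ginvF] <;> ring

lemma mul_sum_ginvF_mul_pd4 {y : Fin 4 → ℝ} (hc : c y ≠ 0) (μ : Fin 4) :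
    c y * ∑ ν, ginvF c v y μ ν * pd4 ν φ y = acousticFlux c v φ μ y := by
  rw [sum_ginvF_mul, acousticFlux, matD_eq_sum]
  refine Fin.cases ?_ (fun i => ?_) μ
  · simp only [spatialGrad, Fin.cons_zero]
    field_simp
  · simp only [spatialGrad, Fin.cons_succ]
    field_simp

lemma boxg_eq_div4_acousticFlux (hc : ∀ y, c y ≠ 0) :
    boxg c v φ x = (1 / c x) * div4 (acousticFlux c v φ) x := by
  simp only [boxg, div4, mul_sum_ginvF_mul_pd4 (hc _)]

lemma div4_acousticFlux (hc : Differentiable ℝ c) (hcx : c x ≠ 0)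
    (hv : ∀ i, Differentiable ℝ (v i)) (hφ : ∀ μ, Differentiable ℝ (pd4 μ φ)) :
    div4 (acousticFlux c v φ) x
      = ∑ i : Fin 3, pd4 i.succ c x * pd4 i.succ φ x
        + c x * ∑ i : Fin 3, pd4 i.succ (pd4 i.succ φ) x
        + matD v c x / c x ^ 2 * matD v φ x
        - (c x)⁻¹ * (divv v x * matD v φ x + matD v (matD v φ) x) := by
  have hBφ := differentiable_matD hv hφ x
  have hBBφ μ := (differentiable_flowField hv μ x).mul hBφ
  unfold acousticFlux
  rw [div4_sub (X := fun μ y => c y * spatialGrad φ μ y)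
      (Y := fun μ y => (c y)⁻¹ * (flowField v μ y * matD v φ y))
      (fun μ => (hc x).mul (differentiable_spatialGrad hφ μ x))
      (fun μ => ((hc x).inv hcx).mul (hBBφ μ)),
    div4_mul (hc x) (fun μ => differentiable_spatialGrad hφ μ x),
    div4_mul (a := fun y => (c y)⁻¹) (X := fun μ y => flowField v μ y * matD v φ y)
      ((hc x).inv hcx) hBBφ,
    div4_flowField_mul hv hBφ, div4_spatialGrad, sum_pd4_mul_spatialGrad,
    sum_pd4_inv_mul_flowField (hc x) hcx]
  ring

end AcousticalMetric

/-- null-frame-free decomposition of the acoustical wave operator: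
□_g φ = -c⁻²B²(φ) + c⁻³B(c)B(φ) + c⁻¹∇c·∇φ + Δφ - c⁻²(div v)B(φ). -/
theorem acoustical_wave_operator_decomposition
    (c : (Fin 4 → ℝ) → ℝ) (v : Fin 3 → (Fin 4 → ℝ) → ℝ) (φ : (Fin 4 → ℝ) → ℝ)
    (hc : ContDiff ℝ 1 c) (hv : ∀ i, ContDiff ℝ 1 (v i)) (hφ : ContDiff ℝ 2 φ)
    (hcpos : ∀ x, 0 < c x) :
    ∀ x, boxg c v φ x
      = -(1/(c x)^2) * matD v (matD v φ) x
        + (1/(c x)^3) * matD v c x * matD v φ x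
        + (1/(c x)) * (∑ i : Fin 3, pd4 i.succ c x * pd4 i.succ φ x)
        + (∑ i : Fin 3, pd4 i.succ (pd4 i.succ φ) x)
        - (1/(c x)^2) * divv v x * matD v φ x := by
  intro x
  have hc0 : ∀ y, c y ≠ 0 := fun y => (hcpos y).ne'
  rw [boxg_eq_div4_acousticFlux hc0, div4_acousticFlux (hc.differentiable one_ne_zero) (hc0 x)
    (fun i => (hv i).differentiable one_ne_zero)
    (fun μ => (contDiff_pd4 μ hφ).differentiable one_ne_zero)]
  field_simp [hc0 x]
  ring
end
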